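/- arXiv:2011.03026 — 2 statements merged into one kernel-verified Lean document; each statement's English description precedes it below -/
import Mathlib

section
/- Let X_1,...,X_n be i.i.d. Bernoulli(p) with 0 < p ≤ 1/20. Let s_1, s_2, s_3, s_4 be r-tuples of distinct indices such that s̄_1 ∩ s̄_2 ≠ ∅, s̄_3 ∩ s̄_4 ≠ ∅, and (s̄_1 ∪ s̄_2) ∩ (s̄_3 ∪ s̄_4) ≠ ∅. Then E[Z_{s_1} Z_{s_2} Z_{s_3} Z_{s_4}] ≥ (15/4) · E[Z_{s_1} Z_{s_2}] · E[Z_{s_3} Z_{s_4}], where Z_s = X_s - p^r. -/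
open Finset

noncomputable section

/-- Probability weight of an outcome `ω` of `n` i.i.d. Bernoulli(p) variables. -/
def wtI (n : ℕ) (p : ℝ) (ω : Fin n → Bool) : ℝ :=
  ∏ v : Fin n, if ω v then p else 1 - p

/-- Expectation under `n` i.i.d. Bernoulli(p) variables. -/
def EI (n : ℕ) (p : ℝ) (f : (Fin n → Bool) → ℝ) : ℝ :=
  ∑ ω : Fin n → Bool, wtI n p ω * f ω

/-- `Z_s = X_s - p^r` where `X_s = ∏_{u ∈ s̄} X_u` for a tuple `s` of `r` distinct indices. -/
def Zt {n r : ℕ} (p : ℝ) (s : Fin r ↪ Fin n) (ω : Fin n → Bool) : ℝ :=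
  (∏ u ∈ Finset.univ.map s, if ω u then (1 : ℝ) else 0) - p ^ r

def XT {n : ℕ} (T : Finset (Fin n)) (ω : Fin n → Bool) : ℝ :=
  ∏ u ∈ T, if ω u then (1 : ℝ) else 0

lemma Zt_def {n r : ℕ} (p : ℝ) (s : Fin r ↪ Fin n) (ω : Fin n → Bool) :
    Zt p s ω = XT (Finset.univ.map s) ω - p ^ r := rfl

lemma XT_eq {n : ℕ} (T : Finset (Fin n)) (ω : Fin n → Bool) :
    XT T ω = if ∀ u ∈ T, ω u then 1 else 0 := by
  unfold XT; rw [Finset.prod_boole]; congr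

lemma XT_mul {n : ℕ} (T₁ T₂ : Finset (Fin n)) (ω : Fin n → Bool) :
    XT T₁ ω * XT T₂ ω = XT (T₁ ∪ T₂) ω := by
  rw [XT_eq, XT_eq, XT_eq, if_congr Finset.forall_mem_union rfl rfl]
  by_cases h1 : ∀ u ∈ T₁, ω u = true <;> by_cases h2 : ∀ u ∈ T₂, ω u = true <;>
    simp [h1, h2]
  rw [if_pos h2, if_pos h1, if_pos ⟨h1, h2⟩]

lemma XT_empty {n : ℕ} (ω : Fin n → Bool) : XT (∅ : Finset (Fin n)) ω = 1 := by
  simp [XT]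

lemma EI_XT (n : ℕ) (p : ℝ) (T : Finset (Fin n)) : EI n p (XT T) = p ^ T.card := by
  unfold EI wtI XT
  have key : ∀ ω : Fin n → Bool,
      (∏ v : Fin n, if ω v then p else 1 - p) * ∏ u ∈ T, (if ω u then (1:ℝ) else 0)
      = ∏ v : Fin n, ((if ω v then p else 1 - p) *
          (if v ∈ T then (if ω v then (1:ℝ) else 0) else 1)) := by
    intro ω
    rw [Finset.prod_mul_distrib]
    congr 1
    rw [Finset.prod_ite_mem, Finset.univ_inter]
  simp_rw [key]
  rw [← Fintype.prod_sum (fun (v : Fin n) (b : Bool) =>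
      (if b then p else 1 - p) * (if v ∈ T then (if b then (1:ℝ) else 0) else 1))]
  have key2 : ∀ v : Fin n, (∑ b : Bool, (if b then p else 1 - p) *
      (if v ∈ T then (if b then (1:ℝ) else 0) else 1)) = if v ∈ T then p else 1 := by
    intro v
    by_cases hv : v ∈ T <;> simp [hv]
  simp_rw [key2]
  rw [Finset.prod_ite_mem, Finset.univ_inter, Finset.prod_const]

lemma EI_add (n : ℕ) (p : ℝ) (f g : (Fin n → Bool) → ℝ) :
    EI n p (fun ω => f ω + g ω) = EI n p f + EI n p g := by
  simp [EI, mul_add, Finset.sum_add_distrib]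

lemma EI_const_mul (n : ℕ) (p c : ℝ) (f : (Fin n → Bool) → ℝ) :
    EI n p (fun ω => c * f ω) = c * EI n p f := by
  simp [EI, Finset.mul_sum]
  apply Finset.sum_congr rfl
  intros; ring

lemma card_univ_map {n r : ℕ} (s : Fin r ↪ Fin n) : (Finset.univ.map s).card = r := by
  simp

lemma EI_pair {n r : ℕ} (p : ℝ) (s₁ s₂ : Fin r ↪ Fin n) :
    EI n p (fun ω => Zt p s₁ ω * Zt p s₂ ω)
      = p ^ ((Finset.univ.map s₁ ∪ Finset.univ.map s₂).card) - p ^ r * p ^ r := by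
  have hfun : (fun ω => Zt p s₁ ω * Zt p s₂ ω) = fun ω =>
      XT (Finset.univ.map s₁ ∪ Finset.univ.map s₂) ω
        + (-(p ^ r)) * XT (Finset.univ.map s₁) ω
        + (-(p ^ r)) * XT (Finset.univ.map s₂) ω
        + (p ^ r * p ^ r) * XT (∅ : Finset (Fin n)) ω := by
    funext ω
    simp only [Zt_def, ← XT_mul, XT_empty]
    ring
  rw [hfun]
  simp only [EI_add, EI_const_mul, EI_XT]
  rw [card_univ_map, card_univ_map, Finset.card_empty, pow_zero]
  ring

lemma EI_quad {n r : ℕ} (p : ℝ) (s₁ s₂ s₃ s₄ : Fin r ↪ Fin n) :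
    EI n p (fun ω => Zt p s₁ ω * Zt p s₂ ω * Zt p s₃ ω * Zt p s₄ ω)
      = p ^ ((Finset.univ.map s₁ ∪ Finset.univ.map s₂ ∪ Finset.univ.map s₃ ∪ Finset.univ.map s₄).card)
        - p ^ r * (p ^ ((Finset.univ.map s₂ ∪ Finset.univ.map s₃ ∪ Finset.univ.map s₄).card)
            + p ^ ((Finset.univ.map s₁ ∪ Finset.univ.map s₃ ∪ Finset.univ.map s₄).card)
            + p ^ ((Finset.univ.map s₁ ∪ Finset.univ.map s₂ ∪ Finset.univ.map s₄).card)
            + p ^ ((Finset.univ.map s₁ ∪ Finset.univ.map s₂ ∪ Finset.univ.map s₃).card))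
        + p ^ r * p ^ r * (p ^ ((Finset.univ.map s₁ ∪ Finset.univ.map s₂).card)
            + p ^ ((Finset.univ.map s₁ ∪ Finset.univ.map s₃).card)
            + p ^ ((Finset.univ.map s₁ ∪ Finset.univ.map s₄).card)
            + p ^ ((Finset.univ.map s₂ ∪ Finset.univ.map s₃).card)
            + p ^ ((Finset.univ.map s₂ ∪ Finset.univ.map s₄).card)
            + p ^ ((Finset.univ.map s₃ ∪ Finset.univ.map s₄).card))
        - p ^ r * p ^ r * p ^ r * (4 * p ^ r)
        + p ^ r * p ^ r * p ^ r * p ^ r := by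
  have hfun : (fun ω => Zt p s₁ ω * Zt p s₂ ω * Zt p s₃ ω * Zt p s₄ ω) = fun ω =>
      XT (Finset.univ.map s₁ ∪ Finset.univ.map s₂ ∪ Finset.univ.map s₃ ∪ Finset.univ.map s₄) ω
        + (-(p ^ r)) * XT (Finset.univ.map s₂ ∪ Finset.univ.map s₃ ∪ Finset.univ.map s₄) ω
        + (-(p ^ r)) * XT (Finset.univ.map s₁ ∪ Finset.univ.map s₃ ∪ Finset.univ.map s₄) ω
        + (-(p ^ r)) * XT (Finset.univ.map s₁ ∪ Finset.univ.map s₂ ∪ Finset.univ.map s₄) ω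
        + (-(p ^ r)) * XT (Finset.univ.map s₁ ∪ Finset.univ.map s₂ ∪ Finset.univ.map s₃) ω
        + (p ^ r * p ^ r) * XT (Finset.univ.map s₁ ∪ Finset.univ.map s₂) ω
        + (p ^ r * p ^ r) * XT (Finset.univ.map s₁ ∪ Finset.univ.map s₃) ω
        + (p ^ r * p ^ r) * XT (Finset.univ.map s₁ ∪ Finset.univ.map s₄) ω
        + (p ^ r * p ^ r) * XT (Finset.univ.map s₂ ∪ Finset.univ.map s₃) ω
        + (p ^ r * p ^ r) * XT (Finset.univ.map s₂ ∪ Finset.univ.map s₄) ω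
        + (p ^ r * p ^ r) * XT (Finset.univ.map s₃ ∪ Finset.univ.map s₄) ω
        + (-(p ^ r * p ^ r * p ^ r)) * XT (Finset.univ.map s₁) ω
        + (-(p ^ r * p ^ r * p ^ r)) * XT (Finset.univ.map s₂) ω
        + (-(p ^ r * p ^ r * p ^ r)) * XT (Finset.univ.map s₃) ω
        + (-(p ^ r * p ^ r * p ^ r)) * XT (Finset.univ.map s₄) ω
        + (p ^ r * p ^ r * p ^ r * p ^ r) * XT (∅ : Finset (Fin n)) ω := by
    funext ω
    simp only [Zt_def, ← XT_mul, XT_empty]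
    ring
  rw [hfun]
  simp only [EI_add, EI_const_mul, EI_XT]
  rw [card_univ_map, card_univ_map, card_univ_map, card_univ_map,
    Finset.card_empty, pow_zero]
  ring

lemma card_union_lt {α : Type*} [DecidableEq α] {A B : Finset α} (h : (A ∩ B).Nonempty) :
    (A ∪ B).card + 1 ≤ A.card + B.card := by
  have h1 := Finset.card_union_add_card_inter A B
  have h2 : 1 ≤ (A ∩ B).card := Finset.card_pos.mpr h
  omega


set_option maxHeartbeats 1000000 in
/-- For `0 < p ≤ 1/20` and `r`-tuples `s_1,s_2,s_3,s_4` of distinct indices with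
`s̄_1 ∩ s̄_2 ≠ ∅`, `s̄_3 ∩ s̄_4 ≠ ∅`, and `(s̄_1 ∪ s̄_2) ∩ (s̄_3 ∪ s̄_4) ≠ ∅`,
`E[Z_{s_1}Z_{s_2}Z_{s_3}Z_{s_4}] ≥ (15/4) E[Z_{s_1}Z_{s_2}] E[Z_{s_3}Z_{s_4}]`. -/
theorem stmt5 (n r : ℕ) (p : ℝ) (hp0 : 0 < p) (hp1 : p ≤ 1 / 20)
    (s₁ s₂ s₃ s₄ : Fin r ↪ Fin n)
    (h12 : ((Finset.univ.map s₁) ∩ (Finset.univ.map s₂)).Nonempty)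
    (h34 : ((Finset.univ.map s₃) ∩ (Finset.univ.map s₄)).Nonempty)
    (h1234 : (((Finset.univ.map s₁) ∪ (Finset.univ.map s₂)) ∩
        ((Finset.univ.map s₃) ∪ (Finset.univ.map s₄))).Nonempty) :
    (15 / 4 : ℝ) * EI n p (fun ω => Zt p s₁ ω * Zt p s₂ ω) *
        EI n p (fun ω => Zt p s₃ ω * Zt p s₄ ω) ≤
      EI n p (fun ω => Zt p s₁ ω * Zt p s₂ ω * Zt p s₃ ω * Zt p s₄ ω) := by

  set A₁ := Finset.univ.map s₁ with hA₁
  set A₂ := Finset.univ.map s₂ with hA₂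
  set A₃ := Finset.univ.map s₃ with hA₃
  set A₄ := Finset.univ.map s₄ with hA₄
  have hc₁ : A₁.card = r := card_univ_map s₁
  have hc₂ : A₂.card = r := card_univ_map s₂
  have hc₃ : A₃.card = r := card_univ_map s₃
  have hc₄ : A₄.card = r := card_univ_map s₄
  set a := (A₁ ∪ A₂).card with ha_def
  set b := (A₃ ∪ A₄).card with hb_def
  set c := (A₁ ∪ A₂ ∪ A₃ ∪ A₄).card with hc_def
  -- cardinality inequalities
  have ha : a + 1 ≤ r + r := by
    have := card_union_lt h12; omega
  have hb : b + 1 ≤ r + r := by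
    have := card_union_lt h34; omega
  have hcab : c + 1 ≤ a + b := by
    have h := card_union_lt h1234
    have he : (A₁ ∪ A₂) ∪ (A₃ ∪ A₄) = A₁ ∪ A₂ ∪ A₃ ∪ A₄ :=
      (Finset.union_assoc _ _ _).symm
    rw [he] at h; omega
  have h234 : c + 1 ≤ (A₂ ∪ A₃ ∪ A₄).card + r := by
    have he : (A₂ ∪ A₃ ∪ A₄) ∪ A₁ = A₁ ∪ A₂ ∪ A₃ ∪ A₄ := by
      rw [Finset.union_comm, ← Finset.union_assoc, ← Finset.union_assoc]
    obtain ⟨x, hx⟩ := h12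
    rw [Finset.mem_inter] at hx
    have hne : (((A₂ ∪ A₃ ∪ A₄) ∩ A₁)).Nonempty :=
      ⟨x, Finset.mem_inter.mpr ⟨Finset.mem_union_left _ (Finset.mem_union_left _ hx.2), hx.1⟩⟩
    have := card_union_lt hne
    rw [he] at this; omega
  have h134 : c + 1 ≤ (A₁ ∪ A₃ ∪ A₄).card + r := by
    have he : (A₁ ∪ A₃ ∪ A₄) ∪ A₂ = A₁ ∪ A₂ ∪ A₃ ∪ A₄ := by
      rw [Finset.union_right_comm (A₁ ∪ A₃) A₄ A₂, Finset.union_right_comm A₁ A₃ A₂]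
    obtain ⟨x, hx⟩ := h12
    rw [Finset.mem_inter] at hx
    have hne : (((A₁ ∪ A₃ ∪ A₄) ∩ A₂)).Nonempty :=
      ⟨x, Finset.mem_inter.mpr ⟨Finset.mem_union_left _ (Finset.mem_union_left _ hx.1), hx.2⟩⟩
    have := card_union_lt hne
    rw [he] at this; omega
  have h124 : c + 1 ≤ (A₁ ∪ A₂ ∪ A₄).card + r := by
    have he : (A₁ ∪ A₂ ∪ A₄) ∪ A₃ = A₁ ∪ A₂ ∪ A₃ ∪ A₄ :=
      Finset.union_right_comm _ _ _
    obtain ⟨x, hx⟩ := h34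
    rw [Finset.mem_inter] at hx
    have hne : (((A₁ ∪ A₂ ∪ A₄) ∩ A₃)).Nonempty :=
      ⟨x, Finset.mem_inter.mpr ⟨Finset.mem_union_right _ hx.2, hx.1⟩⟩
    have := card_union_lt hne
    rw [he] at this; omega
  have h123 : c + 1 ≤ (A₁ ∪ A₂ ∪ A₃).card + r := by
    obtain ⟨x, hx⟩ := h34
    rw [Finset.mem_inter] at hx
    have hne : (((A₁ ∪ A₂ ∪ A₃) ∩ A₄)).Nonempty :=
      ⟨x, Finset.mem_inter.mpr ⟨Finset.mem_union_right _ hx.1, hx.2⟩⟩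
    have := card_union_lt hne
    omega
  have h4r : c + 1 ≤ r + r + r + r := by omega
  -- expectations
  rw [EI_pair p s₁ s₂, EI_pair p s₃ s₄, EI_quad p s₁ s₂ s₃ s₄]
  -- numeric part
  have hp1' : p ≤ 1 := by linarith
  have mono : ∀ k m : ℕ, k ≤ m → p ^ m ≤ p ^ k :=
    fun k m h => pow_le_pow_of_le_one hp0.le hp1' h
  have hnn : ∀ k : ℕ, (0:ℝ) ≤ p ^ k := fun k => pow_nonneg hp0.le k
  have hqq : p ^ r * p ^ r = p ^ (r + r) := (pow_add p r r).symm
  have hq4 : p ^ r * p ^ r * p ^ r * p ^ r = p ^ (r + r + r + r) := by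
    rw [← pow_add, ← pow_add, ← pow_add]
  -- bounds on the two pair expectations
  have hE12a : p ^ a - p ^ r * p ^ r ≤ p ^ a := by
    have := hnn (r + r); rw [hqq]; linarith
  have hE12n : 0 ≤ p ^ a - p ^ r * p ^ r := by
    rw [hqq]; have := mono a (r + r) (by omega); linarith
  have hE34a : p ^ b - p ^ r * p ^ r ≤ p ^ b := by
    have := hnn (r + r); rw [hqq]; linarith
  have hE34n : 0 ≤ p ^ b - p ^ r * p ^ r := by
    rw [hqq]; have := mono b (r + r) (by omega); linarith
  -- LHS bound
  have hab : p ^ a * p ^ b ≤ p * p ^ c := by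
    rw [← pow_add]
    calc p ^ (a + b) ≤ p ^ (c + 1) := mono (c + 1) (a + b) hcab
      _ = p * p ^ c := by rw [pow_succ]; ring
  have hLHS : (15 / 4 : ℝ) * (p ^ a - p ^ r * p ^ r) * (p ^ b - p ^ r * p ^ r)
      ≤ (15 / 4) * (p * p ^ c) := by
    have h1 : (p ^ a - p ^ r * p ^ r) * (p ^ b - p ^ r * p ^ r) ≤ p ^ a * p ^ b := by
      have := mul_le_mul hE12a hE34a hE34n (hnn a)
      linarith
    have h2 : (p ^ a - p ^ r * p ^ r) * (p ^ b - p ^ r * p ^ r) ≤ p * p ^ c :=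
      le_trans h1 hab
    calc (15 / 4 : ℝ) * (p ^ a - p ^ r * p ^ r) * (p ^ b - p ^ r * p ^ r)
        = (15 / 4) * ((p ^ a - p ^ r * p ^ r) * (p ^ b - p ^ r * p ^ r)) := by ring
      _ ≤ (15 / 4) * (p * p ^ c) := by linarith
  -- RHS bound: each subtracted term is ≤ p * p^c
  have hterm : ∀ w : ℕ, c + 1 ≤ w + r → p ^ r * p ^ w ≤ p * p ^ c := by
    intro w hw
    rw [← pow_add]
    calc p ^ (r + w) ≤ p ^ (c + 1) := mono (c + 1) (r + w) (by omega)
      _ = p * p ^ c := by rw [pow_succ]; ring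
  have ht1 := hterm _ h234
  have ht2 := hterm _ h134
  have ht3 := hterm _ h124
  have ht4 := hterm _ h123
  have ht5 : p ^ r * p ^ r * p ^ r * p ^ r ≤ p * p ^ c := by
    rw [hq4]
    calc p ^ (r + r + r + r) ≤ p ^ (c + 1) := mono (c + 1) (r + r + r + r) h4r
      _ = p * p ^ c := by rw [pow_succ]; ring
  have hpos2 : (0:ℝ) ≤ p ^ r * p ^ r * (p ^ (A₁ ∪ A₂).card + p ^ (A₁ ∪ A₃).card
      + p ^ (A₁ ∪ A₄).card + p ^ (A₂ ∪ A₃).card + p ^ (A₂ ∪ A₄).card + p ^ (A₃ ∪ A₄).card) := by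
    have := hnn r
    have h1 := hnn (A₁ ∪ A₂).card; have h2 := hnn (A₁ ∪ A₃).card
    have h3 := hnn (A₁ ∪ A₄).card; have h4 := hnn (A₂ ∪ A₃).card
    have h5 := hnn (A₂ ∪ A₄).card; have h6 := hnn (A₃ ∪ A₄).card
    positivity
  have hRHS : p ^ c - 8 * (p * p ^ c) ≤
      p ^ c - p ^ r * (p ^ (A₂ ∪ A₃ ∪ A₄).card + p ^ (A₁ ∪ A₃ ∪ A₄).card
          + p ^ (A₁ ∪ A₂ ∪ A₄).card + p ^ (A₁ ∪ A₂ ∪ A₃).card)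
        + p ^ r * p ^ r * (p ^ (A₁ ∪ A₂).card + p ^ (A₁ ∪ A₃).card
          + p ^ (A₁ ∪ A₄).card + p ^ (A₂ ∪ A₃).card + p ^ (A₂ ∪ A₄).card + p ^ (A₃ ∪ A₄).card)
        - p ^ r * p ^ r * p ^ r * (4 * p ^ r)
        + p ^ r * p ^ r * p ^ r * p ^ r := by
    have h4t : p ^ r * p ^ r * p ^ r * (4 * p ^ r) ≤ 4 * (p * p ^ c) := by
      have he : p ^ r * p ^ r * p ^ r * (4 * p ^ r) = 4 * (p ^ r * p ^ r * p ^ r * p ^ r) := by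
        ring
      rw [he]; linarith [ht5]
    have hq4n : (0:ℝ) ≤ p ^ r * p ^ r * p ^ r * p ^ r := by positivity
    have hsum : p ^ r * (p ^ (A₂ ∪ A₃ ∪ A₄).card + p ^ (A₁ ∪ A₃ ∪ A₄).card
        + p ^ (A₁ ∪ A₂ ∪ A₄).card + p ^ (A₁ ∪ A₂ ∪ A₃).card) ≤ 4 * (p * p ^ c) := by
      have hd : p ^ r * (p ^ (A₂ ∪ A₃ ∪ A₄).card + p ^ (A₁ ∪ A₃ ∪ A₄).card
          + p ^ (A₁ ∪ A₂ ∪ A₄).card + p ^ (A₁ ∪ A₂ ∪ A₃).card)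
          = p ^ r * p ^ (A₂ ∪ A₃ ∪ A₄).card + p ^ r * p ^ (A₁ ∪ A₃ ∪ A₄).card
            + p ^ r * p ^ (A₁ ∪ A₂ ∪ A₄).card + p ^ r * p ^ (A₁ ∪ A₂ ∪ A₃).card := by ring
      rw [hd]; linarith [ht1, ht2, ht3, ht4]
    linarith [hpos2, h4t, hq4n, hsum]
  -- combine
  have hfin : (15 / 4 : ℝ) * (p * p ^ c) ≤ p ^ c - 8 * (p * p ^ c) := by
    have hc0 := hnn c
    have hx : p * p ^ c ≤ (1 / 20) * p ^ c := by
      have := mul_le_mul_of_nonneg_right hp1 hc0; linarith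
    have hx0 : (0:ℝ) ≤ p * p ^ c := by positivity
    linarith
  calc (15 / 4 : ℝ) * (p ^ a - p ^ r * p ^ r) * (p ^ b - p ^ r * p ^ r)
      ≤ (15 / 4) * (p * p ^ c) := hLHS
    _ ≤ p ^ c - 8 * (p * p ^ c) := hfin
    _ ≤ _ := hRHS
end
end

section
/- The ε-truncated statistic T⁺_ε(H,G) has variance at most ε · (2^{|V(H)|} - 1) · p^{2|V(H)|} · N(H,G)^2. -/
open Finset

noncomputable section

/-- `M_H(s) = ∏_{(i,j)∈E(H)} a_{s_i s_j}`: indicator that the tuple `s` of distinct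
vertices maps every edge of `H` to an edge of `G`. -/
def MH {k : ℕ} {V : Type*} (H : SimpleGraph (Fin k)) [DecidableRel H.Adj]
    (G : SimpleGraph V) [DecidableRel G.Adj] (s : Fin k ↪ V) : ℝ :=
  ∏ i : Fin k, ∏ j : Fin k,
    if H.Adj i j then (if G.Adj (s i) (s j) then 1 else 0) else 1

/-- `N(H,G) = |Aut(H)|⁻¹ ∑_s M_H(s)`: the number of copies of `H` in `G`. -/
def NHG {k : ℕ} {V : Type*} [Fintype V] [DecidableEq V] (H : SimpleGraph (Fin k))
    [DecidableRel H.Adj] (G : SimpleGraph V) [DecidableRel G.Adj] : ℝ :=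
  (Nat.card (H ≃g H) : ℝ)⁻¹ * ∑ s : Fin k ↪ V, MH H G s

/-- `t_H(A)`: the number of copies of `H` in `G` whose vertex set contains `A`. -/
def tH {k : ℕ} {V : Type*} [Fintype V] [DecidableEq V] (H : SimpleGraph (Fin k))
    [DecidableRel H.Adj] (G : SimpleGraph V) [DecidableRel G.Adj] (A : Finset V) : ℝ :=
  (Nat.card (H ≃g H) : ℝ)⁻¹ *
    ∑ s ∈ Finset.univ.filter (fun s : Fin k ↪ V => A ⊆ Finset.univ.map s), MH H G s

/-- Probability weight of a sampling outcome `ω : V → Bool` when each vertex is retained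
independently with probability `p`. -/
def wt {V : Type*} [Fintype V] (p : ℝ) (ω : V → Bool) : ℝ :=
  ∏ v : V, if ω v then p else 1 - p

/-- Expectation under the subgraph sampling model with sampling ratio `p`. -/
def expec {V : Type*} [Fintype V] [DecidableEq V] (p : ℝ) (f : (V → Bool) → ℝ) : ℝ :=
  ∑ ω : V → Bool, wt p ω * f ω

/-- `X_s = ∏_{u ∈ s̄} X_u`: indicator that all entries of the tuple `s` are sampled. -/
def Xs {k : ℕ} {V : Type*} (s : Fin k ↪ V) (ω : V → Bool) : ℝ :=
  ∏ u ∈ Finset.univ.map s, if ω u then 1 else 0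

/-- `T(H,G) = |Aut(H)|⁻¹ ∑_s M_H(s) X_s`: the number of copies of `H` spanned by the
sampled vertices. -/
def TH {k : ℕ} {V : Type*} [Fintype V] [DecidableEq V] (H : SimpleGraph (Fin k))
    [DecidableRel H.Adj] (G : SimpleGraph V) [DecidableRel G.Adj] (ω : V → Bool) : ℝ :=
  (Nat.card (H ≃g H) : ℝ)⁻¹ * ∑ s : Fin k ↪ V, MH H G s * Xs s ω

open scoped Classical

/-- `M_n = ∑_{A, 1≤|A|≤|V(H)|} t_H(A) · 1{t_H(A) > ε p^{|A|} N(H,G)}`. -/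
def Mn {k : ℕ} {V : Type*} [Fintype V] [DecidableEq V] (H : SimpleGraph (Fin k))
    [DecidableRel H.Adj] (G : SimpleGraph V) [DecidableRel G.Adj] (ε p : ℝ) : ℝ :=
  ∑ A ∈ (Finset.univ : Finset (Finset V)).filter (fun A => 1 ≤ A.card ∧ A.card ≤ k),
    tH H G A * (if ε * p ^ A.card * NHG H G < tH H G A then 1 else 0)

/-- The good event `𝓑(s)`: for every nonempty `A ⊆ s̄`, `t_H(A) ≤ ε p^{|A|} N(H,G)`. -/
def Bev {k : ℕ} {V : Type*} [Fintype V] [DecidableEq V] (H : SimpleGraph (Fin k))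
    [DecidableRel H.Adj] (G : SimpleGraph V) [DecidableRel G.Adj] (ε p : ℝ)
    (s : Fin k ↪ V) : Prop :=
  ∀ A : Finset V, A ⊆ Finset.univ.map s → A.Nonempty →
    tH H G A ≤ ε * p ^ A.card * NHG H G

/-- The truncated count `N⁺_ε(H,G) = |Aut(H)|⁻¹ ∑_{s : 𝓑(s)} M_H(s)`. -/
def Nplus {k : ℕ} {V : Type*} [Fintype V] [DecidableEq V] (H : SimpleGraph (Fin k))
    [DecidableRel H.Adj] (G : SimpleGraph V) [DecidableRel G.Adj] (ε p : ℝ) : ℝ :=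
  (Nat.card (H ≃g H) : ℝ)⁻¹ *
    ∑ s ∈ Finset.univ.filter (fun s : Fin k ↪ V => Bev H G ε p s), MH H G s

/-- The truncated statistic `T⁺_ε(H,G) = |Aut(H)|⁻¹ ∑_{s : 𝓑(s)} M_H(s) X_s`. -/
def Tplus {k : ℕ} {V : Type*} [Fintype V] [DecidableEq V] (H : SimpleGraph (Fin k))
    [DecidableRel H.Adj] (G : SimpleGraph V) [DecidableRel G.Adj] (ε p : ℝ)
    (ω : V → Bool) : ℝ :=
  (Nat.card (H ≃g H) : ℝ)⁻¹ *
    ∑ s ∈ Finset.univ.filter (fun s : Fin k ↪ V => Bev H G ε p s), MH H G s * Xs s ω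


section AuxProb

variable {V : Type*} [Fintype V] [DecidableEq V]

private lemma prod_ind (ω : V → Bool) (S : Finset V) :
    (∏ u ∈ S, if ω u then (1:ℝ) else 0) = if ∀ u ∈ S, ω u = true then 1 else 0 := by
  split_ifs with h
  · exact Finset.prod_eq_one fun u hu => by simp [h u hu]
  · push_neg at h
    obtain ⟨u, hu, hf⟩ := h
    exact Finset.prod_eq_zero hu (by simp [hf])

private lemma expec_ind (p : ℝ) (S : Finset V) :
    expec p (fun ω => ∏ u ∈ S, if ω u then (1:ℝ) else 0) = p ^ S.card := by
  unfold expec wt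
  have h1 : ∀ ω : V → Bool,
      (∏ v : V, if ω v then p else 1 - p) * ∏ u ∈ S, (if ω u then (1:ℝ) else 0)
      = ∏ v : V, ((if ω v then p else 1 - p) *
          (if v ∈ S then (if ω v then (1:ℝ) else 0) else 1)) := by
    intro ω
    rw [Finset.prod_mul_distrib]
    congr 1
    rw [Finset.prod_ite_mem, Finset.univ_inter]
  simp only [h1]
  rw [← Fintype.piFinset_univ,
    ← Finset.prod_univ_sum (fun _ : V => (univ : Finset Bool))
      (fun v b => (if b then p else 1 - p) * (if v ∈ S then (if b then (1:ℝ) else 0) else 1))]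
  have h2 : ∀ v : V, (∑ b : Bool, (if b then p else 1 - p) *
      (if v ∈ S then (if b then (1:ℝ) else 0) else 1)) = if v ∈ S then p else 1 := by
    intro v
    rw [Fintype.sum_bool]
    by_cases hv : v ∈ S <;> simp [hv]
  simp only [h2]
  rw [Finset.prod_ite_mem, Finset.univ_inter, Finset.prod_const]

private lemma expec_total (p : ℝ) : expec (V := V) p (fun _ => (1:ℝ)) = 1 := by
  simpa using expec_ind (V := V) p (∅ : Finset V)

private lemma expec_sum {ι : Type*} (p : ℝ) (t : Finset ι) (F : ι → (V → Bool) → ℝ) :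
    expec p (fun ω => ∑ x ∈ t, F x ω) = ∑ x ∈ t, expec p (F x) := by
  unfold expec
  simp only [Finset.mul_sum]
  exact Finset.sum_comm

private lemma expec_const_mul (p a : ℝ) (f : (V → Bool) → ℝ) :
    expec p (fun ω => a * f ω) = a * expec p f := by
  unfold expec
  rw [Finset.mul_sum]
  exact Finset.sum_congr rfl fun ω _ => by ring

private lemma var_eq (p : ℝ) (f : (V → Bool) → ℝ) :
    expec p (fun ω => (f ω - expec p f) ^ 2)
      = expec p (fun ω => f ω ^ 2) - (expec p f) ^ 2 := by
  have hw : ∑ ω : V → Bool, wt p ω = 1 := by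
    simpa [expec] using expec_total (V := V) p
  set μ := expec p f with hμ
  have hsum : expec p (fun ω => (f ω - μ) ^ 2)
      = ∑ ω : V → Bool, (wt p ω * f ω ^ 2 - 2 * μ * (wt p ω * f ω) + μ ^ 2 * wt p ω) := by
    unfold expec
    exact Finset.sum_congr rfl fun ω _ => by ring
  rw [hsum, Finset.sum_add_distrib, Finset.sum_sub_distrib, ← Finset.mul_sum, ← Finset.mul_sum,
    hw]
  have h3 : ∑ ω : V → Bool, wt p ω * f ω = μ := rfl
  rw [h3]
  unfold expec
  ring

private lemma prod_ind_union (ω : V → Bool) (S T : Finset V) :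
    (∏ u ∈ S, if ω u then (1:ℝ) else 0) * (∏ u ∈ T, if ω u then (1:ℝ) else 0)
      = ∏ u ∈ S ∪ T, if ω u then (1:ℝ) else 0 := by
  rw [prod_ind, prod_ind, prod_ind]
  by_cases h1 : ∀ u ∈ S, ω u = true <;> by_cases h2 : ∀ u ∈ T, ω u = true
  · rw [if_pos h1, if_pos h2, if_pos (fun u hu => by
      rcases Finset.mem_union.mp hu with h | h
      exacts [h1 u h, h2 u h]), one_mul]
  · rw [if_neg h2, if_neg (show ¬∀ u ∈ S ∪ T, ω u = true from
      fun h => h2 fun u hu => h u (Finset.mem_union_right _ hu)), mul_zero]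
  · rw [if_neg h1, if_neg (show ¬∀ u ∈ S ∪ T, ω u = true from
      fun h => h1 fun u hu => h u (Finset.mem_union_left _ hu)), zero_mul]
  · rw [if_neg h1, if_neg (show ¬∀ u ∈ S ∪ T, ω u = true from
      fun h => h1 fun u hu => h u (Finset.mem_union_left _ hu)), zero_mul]

private lemma sum_sum_mul {ι : Type*} (t : Finset ι) (f g : ι → ℝ) (q : ℝ) :
    ∑ i ∈ t, ∑ j ∈ t, f i * g j * q = (∑ i ∈ t, f i) * (∑ j ∈ t, g j) * q := by
  rw [Finset.sum_mul_sum, Finset.sum_mul]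
  exact Finset.sum_congr rfl fun i _ => (Finset.sum_mul _ _ _).symm

end AuxProb

section AuxGraph

variable {k : ℕ} {V : Type*} [Fintype V] [DecidableEq V]
  (H : SimpleGraph (Fin k)) [DecidableRel H.Adj]
  (G : SimpleGraph V) [DecidableRel G.Adj]

private lemma MH_nonneg (s : Fin k ↪ V) : 0 ≤ MH H G s :=
  Finset.prod_nonneg fun i _ => Finset.prod_nonneg fun j _ => by
    split_ifs <;> norm_num

private lemma sum_MH_nonneg (t : Finset (Fin k ↪ V)) : 0 ≤ ∑ s ∈ t, MH H G s :=
  Finset.sum_nonneg fun s _ => MH_nonneg H G s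

private lemma aut_pos : 0 < (Nat.card (H ≃g H) : ℝ) := by
  haveI : Finite (H ≃g H) :=
    Finite.of_injective (fun e => (e : Fin k → Fin k)) DFunLike.coe_injective
  haveI : Nonempty (H ≃g H) := ⟨RelIso.refl _⟩
  exact_mod_cast Nat.card_pos

private lemma NHG_nonneg : 0 ≤ NHG H G :=
  mul_nonneg (inv_nonneg.mpr (aut_pos H).le) (sum_MH_nonneg H G _)

private lemma tH_nonneg (A : Finset V) : 0 ≤ tH H G A :=
  mul_nonneg (inv_nonneg.mpr (aut_pos H).le) (sum_MH_nonneg H G _)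

private lemma card_map_s (s : Fin k ↪ V) : (Finset.univ.map s).card = k := by simp

private lemma sum_tH_nonempty :
    ∑ A ∈ (Finset.univ : Finset (Finset V)).filter (fun A => A.Nonempty), tH H G A
      = ((2:ℝ) ^ k - 1) * NHG H G := by
  unfold tH NHG
  rw [← Finset.mul_sum]
  have h1 : ∀ A : Finset V,
      ∑ s ∈ Finset.univ.filter (fun s : Fin k ↪ V => A ⊆ Finset.univ.map s), MH H G s
        = ∑ s : Fin k ↪ V, if A ⊆ Finset.univ.map s then MH H G s else 0 := fun A =>
    Finset.sum_filter _ _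
  simp only [h1]
  rw [Finset.sum_comm]
  have h2 : ∀ s : Fin k ↪ V,
      ∑ A ∈ (Finset.univ : Finset (Finset V)).filter (fun A => A.Nonempty),
        (if A ⊆ Finset.univ.map s then MH H G s else 0)
      = ((2:ℝ) ^ k - 1) * MH H G s := by
    intro s
    rw [← Finset.sum_filter]
    have hset : ((Finset.univ : Finset (Finset V)).filter (fun A => A.Nonempty)).filter
        (fun A => A ⊆ Finset.univ.map s) = ((Finset.univ.map s).powerset).erase ∅ := by
      ext A
      simp [Finset.mem_powerset, Finset.nonempty_iff_ne_empty, and_comm]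
    rw [hset, Finset.sum_const, Finset.card_erase_of_mem
      (Finset.mem_powerset.mpr (Finset.empty_subset _)), Finset.card_powerset, card_map_s,
      nsmul_eq_mul]
    congr 1
    push_cast [Nat.one_le_two_pow]
    ring
  simp only [h2]
  rw [← Finset.mul_sum]
  ring

end AuxGraph

set_option maxHeartbeats 1000000 in
/-- `Var[T⁺_ε(H,G)] ≤ ε (2^{|V(H)|}-1) p^{2|V(H)|} N(H,G)²`. -/
theorem stmt12 {k : ℕ} {V : Type*} [Fintype V] [DecidableEq V]
    (H : SimpleGraph (Fin k)) [DecidableRel H.Adj] (hconn : H.Connected)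
    (G : SimpleGraph V) [DecidableRel G.Adj]
    (ε p : ℝ) (hε : 0 < ε) (hp0 : 0 < p) (hp1 : p < 1) :
    expec p (fun ω => (Tplus H G ε p ω - expec p (Tplus H G ε p)) ^ 2) ≤
      ε * ((2 : ℝ) ^ k - 1) * p ^ (2 * k) * (NHG H G) ^ 2 := by
  classical
  set aut : ℝ := (Nat.card (H ≃g H) : ℝ) with haut
  have haut_pos : 0 < aut := by rw [haut]; exact aut_pos H
  set c : ℝ := aut⁻¹ with hc
  have hca : c * aut = 1 := inv_mul_cancel₀ haut_pos.ne'
  set Bf := Finset.univ.filter (fun s : Fin k ↪ V => Bev H G ε p s) with hBf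
  have hN0 : 0 ≤ NHG H G := NHG_nonneg H G
  have hEX2 : ∀ s1 s2 : Fin k ↪ V,
      expec p (fun ω => Xs s1 ω * Xs s2 ω)
        = p ^ ((Finset.univ.map s1 ∪ Finset.univ.map s2).card) := by
    intro s1 s2
    have h : (fun ω : V → Bool => Xs s1 ω * Xs s2 ω)
        = fun ω => ∏ u ∈ Finset.univ.map s1 ∪ Finset.univ.map s2,
            if ω u then (1:ℝ) else 0 :=
      funext fun ω => prod_ind_union ω _ _
    rw [h, expec_ind]
  have hEX : ∀ s : Fin k ↪ V, expec p (Xs s) = p ^ k := by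
    intro s
    have h : Xs s = fun ω => ∏ u ∈ Finset.univ.map s, if ω u then (1:ℝ) else 0 := rfl
    rw [h, expec_ind, card_map_s]
  have hTfun : Tplus H G ε p = fun ω => c * ∑ s ∈ Bf, MH H G s * Xs s ω := by
    rw [hc, haut, hBf]; rfl
  -- first moment
  have hET : expec p (Tplus H G ε p) = c * ∑ s ∈ Bf, MH H G s * p ^ k := by
    rw [hTfun, expec_const_mul, expec_sum]
    congr 1
    exact Finset.sum_congr rfl fun s _ => by rw [expec_const_mul, hEX]
  -- second moment
  have hT2 : expec p (fun ω => Tplus H G ε p ω ^ 2)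
      = c ^ 2 * ∑ s1 ∈ Bf, ∑ s2 ∈ Bf, MH H G s1 * MH H G s2
          * p ^ ((Finset.univ.map s1 ∪ Finset.univ.map s2).card) := by
    have hsq : ∀ ω : V → Bool, Tplus H G ε p ω ^ 2
        = c ^ 2 * ∑ s1 ∈ Bf, ∑ s2 ∈ Bf,
            (MH H G s1 * MH H G s2) * (Xs s1 ω * Xs s2 ω) := by
      intro ω
      rw [hTfun, mul_pow, sq (∑ s ∈ Bf, MH H G s * Xs s ω), Finset.sum_mul_sum]
      congr 1
      exact Finset.sum_congr rfl fun s1 _ => Finset.sum_congr rfl fun s2 _ => by ring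
    rw [congrArg (expec p) (funext hsq), expec_const_mul]
    congr 1
    rw [expec_sum]
    refine Finset.sum_congr rfl fun s1 _ => ?_
    rw [expec_sum]
    refine Finset.sum_congr rfl fun s2 _ => ?_
    rw [expec_const_mul, hEX2]
  -- variance formula
  have hvar : expec p (fun ω => (Tplus H G ε p ω - expec p (Tplus H G ε p)) ^ 2)
      = c ^ 2 * ∑ s1 ∈ Bf, ∑ s2 ∈ Bf, MH H G s1 * MH H G s2 *
          (p ^ ((Finset.univ.map s1 ∪ Finset.univ.map s2).card) - p ^ k * p ^ k) := by
    rw [var_eq, hT2, hET, mul_pow, ← mul_sub]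
    congr 1
    rw [sq (∑ s ∈ Bf, MH H G s * p ^ k), Finset.sum_mul_sum, ← Finset.sum_sub_distrib]
    refine Finset.sum_congr rfl fun s1 _ => ?_
    rw [← Finset.sum_sub_distrib]
    exact Finset.sum_congr rfl fun s2 _ => by ring
  rw [hvar]
  set Afin := (Finset.univ : Finset (Finset V)).filter
    (fun A => A.Nonempty ∧ A.card ≤ k) with hAfin
  -- termwise bound, exchanging pairs for intersections
  have hterm : ∀ s1 ∈ Bf, ∀ s2 ∈ Bf,
      MH H G s1 * MH H G s2 *
          (p ^ ((Finset.univ.map s1 ∪ Finset.univ.map s2).card) - p ^ k * p ^ k)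
        ≤ ∑ A ∈ Afin, (if Finset.univ.map s1 ∩ Finset.univ.map s2 = A then
            MH H G s1 * MH H G s2 * p ^ (2 * k - A.card) else 0) := by
    intro s1 _ s2 _
    rw [Finset.sum_ite_eq]
    have hMM : 0 ≤ MH H G s1 * MH H G s2 := mul_nonneg (MH_nonneg H G s1) (MH_nonneg H G s2)
    by_cases hA : (Finset.univ.map s1 ∩ Finset.univ.map s2).Nonempty
    · have hcardle : (Finset.univ.map s1 ∩ Finset.univ.map s2).card ≤ k := by
        calc (Finset.univ.map s1 ∩ Finset.univ.map s2).card
            ≤ (Finset.univ.map s1).card := Finset.card_le_card Finset.inter_subset_left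
          _ = k := card_map_s s1
      have hmem : Finset.univ.map s1 ∩ Finset.univ.map s2 ∈ Afin := by
        rw [hAfin, Finset.mem_filter]
        exact ⟨Finset.mem_univ _, hA, hcardle⟩
      rw [if_pos hmem]
      have hcu : (Finset.univ.map s1 ∪ Finset.univ.map s2).card
          = 2 * k - (Finset.univ.map s1 ∩ Finset.univ.map s2).card := by
        have h := Finset.card_union_add_card_inter (Finset.univ.map s1) (Finset.univ.map s2)
        rw [card_map_s, card_map_s] at h
        omega
      rw [hcu]
      have hpk : (0:ℝ) ≤ p ^ k * p ^ k := by positivity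
      exact mul_le_mul_of_nonneg_left (sub_le_self _ hpk) hMM
    · rw [Finset.not_nonempty_iff_eq_empty] at hA
      have hnm : Finset.univ.map s1 ∩ Finset.univ.map s2 ∉ Afin := by
        rw [hA, hAfin, Finset.mem_filter]
        rintro ⟨-, h, -⟩
        exact Finset.not_nonempty_empty h
      rw [if_neg hnm]
      have hcu : (Finset.univ.map s1 ∪ Finset.univ.map s2).card = k + k := by
        rw [Finset.card_union_of_disjoint (Finset.disjoint_iff_inter_eq_empty.mpr hA),
          card_map_s, card_map_s]
      rw [hcu, pow_add]
      simp
  have step1 : c ^ 2 * ∑ s1 ∈ Bf, ∑ s2 ∈ Bf, MH H G s1 * MH H G s2 *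
          (p ^ ((Finset.univ.map s1 ∪ Finset.univ.map s2).card) - p ^ k * p ^ k)
      ≤ c ^ 2 * ∑ A ∈ Afin, ∑ s1 ∈ Bf, ∑ s2 ∈ Bf,
          (if Finset.univ.map s1 ∩ Finset.univ.map s2 = A then
            MH H G s1 * MH H G s2 * p ^ (2 * k - A.card) else 0) := by
    refine mul_le_mul_of_nonneg_left ?_ (by positivity)
    calc ∑ s1 ∈ Bf, ∑ s2 ∈ Bf, MH H G s1 * MH H G s2 *
            (p ^ ((Finset.univ.map s1 ∪ Finset.univ.map s2).card) - p ^ k * p ^ k)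
        ≤ ∑ s1 ∈ Bf, ∑ s2 ∈ Bf, ∑ A ∈ Afin,
            (if Finset.univ.map s1 ∩ Finset.univ.map s2 = A then
              MH H G s1 * MH H G s2 * p ^ (2 * k - A.card) else 0) :=
        Finset.sum_le_sum fun s1 h1 => Finset.sum_le_sum fun s2 h2 => hterm s1 h1 s2 h2
      _ = ∑ s1 ∈ Bf, ∑ A ∈ Afin, ∑ s2 ∈ Bf,
            (if Finset.univ.map s1 ∩ Finset.univ.map s2 = A then
              MH H G s1 * MH H G s2 * p ^ (2 * k - A.card) else 0) :=
        Finset.sum_congr rfl fun s1 _ => Finset.sum_comm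
      _ = ∑ A ∈ Afin, ∑ s1 ∈ Bf, ∑ s2 ∈ Bf,
            (if Finset.univ.map s1 ∩ Finset.univ.map s2 = A then
              MH H G s1 * MH H G s2 * p ^ (2 * k - A.card) else 0) :=
        Finset.sum_comm
  -- per-A bound
  have stepA : ∀ A ∈ Afin,
      ∑ s1 ∈ Bf, ∑ s2 ∈ Bf,
          (if Finset.univ.map s1 ∩ Finset.univ.map s2 = A then
            MH H G s1 * MH H G s2 * p ^ (2 * k - A.card) else 0)
        ≤ aut ^ 2 * (ε * p ^ (2 * k) * NHG H G * tH H G A) := by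
    intro A hAmem
    rw [hAfin, Finset.mem_filter] at hAmem
    obtain ⟨-, hAne, hAk⟩ := hAmem
    set FA := Bf.filter (fun s : Fin k ↪ V => A ⊆ Finset.univ.map s) with hFA
    set SA := ∑ s ∈ FA, MH H G s with hSA
    have hSA0 : 0 ≤ SA := sum_MH_nonneg H G _
    have h1 : ∑ s1 ∈ Bf, ∑ s2 ∈ Bf,
          (if Finset.univ.map s1 ∩ Finset.univ.map s2 = A then
            MH H G s1 * MH H G s2 * p ^ (2 * k - A.card) else 0)
        ≤ SA * SA * p ^ (2 * k - A.card) := by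
      have hbound : ∀ s1 s2 : Fin k ↪ V,
          (if Finset.univ.map s1 ∩ Finset.univ.map s2 = A then
            MH H G s1 * MH H G s2 * p ^ (2 * k - A.card) else 0)
          ≤ (if A ⊆ Finset.univ.map s1 then MH H G s1 else 0) *
            (if A ⊆ Finset.univ.map s2 then MH H G s2 else 0) * p ^ (2 * k - A.card) := by
        intro s1 s2
        have hm1 := MH_nonneg H G s1
        have hm2 := MH_nonneg H G s2
        by_cases h : Finset.univ.map s1 ∩ Finset.univ.map s2 = A
        · rw [if_pos h,
            if_pos (show A ⊆ Finset.univ.map s1 from h ▸ Finset.inter_subset_left),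
            if_pos (show A ⊆ Finset.univ.map s2 from h ▸ Finset.inter_subset_right)]
        · rw [if_neg h]
          have i1 : (0:ℝ) ≤ if A ⊆ Finset.univ.map s1 then MH H G s1 else 0 := by
            split_ifs
            exacts [hm1, le_rfl]
          have i2 : (0:ℝ) ≤ if A ⊆ Finset.univ.map s2 then MH H G s2 else 0 := by
            split_ifs
            exacts [hm2, le_rfl]
          exact mul_nonneg (mul_nonneg i1 i2) (by positivity)
      have hfilter : ∑ s ∈ Bf, (if A ⊆ Finset.univ.map s then MH H G s else 0) = SA := by
        simp only [hSA, hFA, Finset.sum_filter]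
      calc ∑ s1 ∈ Bf, ∑ s2 ∈ Bf,
            (if Finset.univ.map s1 ∩ Finset.univ.map s2 = A then
              MH H G s1 * MH H G s2 * p ^ (2 * k - A.card) else 0)
          ≤ ∑ s1 ∈ Bf, ∑ s2 ∈ Bf,
            (if A ⊆ Finset.univ.map s1 then MH H G s1 else 0) *
            (if A ⊆ Finset.univ.map s2 then MH H G s2 else 0) * p ^ (2 * k - A.card) :=
          Finset.sum_le_sum fun s1 _ => Finset.sum_le_sum fun s2 _ => hbound s1 s2
        _ = SA * SA * p ^ (2 * k - A.card) := by
          rw [sum_sum_mul, hfilter]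
    have h2 : SA * SA * p ^ (2 * k - A.card)
        ≤ aut ^ 2 * (ε * p ^ (2 * k) * NHG H G * tH H G A) := by
      have hSAle : SA ≤ aut * tH H G A := by
        have hsub : FA ⊆ Finset.univ.filter (fun s : Fin k ↪ V => A ⊆ Finset.univ.map s) := by
          rw [hFA, hBf]
          exact Finset.filter_subset_filter _ (Finset.filter_subset _ _)
        have hle : SA ≤ ∑ s ∈ Finset.univ.filter
            (fun s : Fin k ↪ V => A ⊆ Finset.univ.map s), MH H G s := by
          rw [hSA]
          exact Finset.sum_le_sum_of_subset_of_nonneg hsub fun s _ _ => MH_nonneg H G s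
        have htA : aut * tH H G A = ∑ s ∈ Finset.univ.filter
            (fun s : Fin k ↪ V => A ⊆ Finset.univ.map s), MH H G s := by
          unfold tH
          rw [← haut, ← mul_assoc, mul_inv_cancel₀ haut_pos.ne', one_mul]
        rw [htA]
        exact hle
      have htHnn : 0 ≤ tH H G A := tH_nonneg H G A
      rcases eq_or_ne SA 0 with h0 | h0
      · rw [h0]
        have hrhs : 0 ≤ aut ^ 2 * (ε * p ^ (2 * k) * NHG H G * tH H G A) := by
          apply mul_nonneg (by positivity)
          exact mul_nonneg (mul_nonneg (mul_nonneg hε.le (by positivity)) hN0) htHnn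
        simpa using hrhs
      · have hFAne : FA.Nonempty := by
          rw [hSA] at h0
          exact Finset.nonempty_of_sum_ne_zero h0
        obtain ⟨s, hs⟩ := hFAne
        rw [hFA, Finset.mem_filter] at hs
        obtain ⟨hsB, hsA⟩ := hs
        rw [hBf, Finset.mem_filter] at hsB
        have htHA : tH H G A ≤ ε * p ^ A.card * NHG H G := hsB.2 A hsA hAne
        have hSAle2 : SA ≤ aut * (ε * p ^ A.card * NHG H G) :=
          hSAle.trans (mul_le_mul_of_nonneg_left htHA haut_pos.le)
        have hq : (0:ℝ) ≤ p ^ (2 * k - A.card) := by positivity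
        have hmul : SA * SA ≤ (aut * tH H G A) * (aut * (ε * p ^ A.card * NHG H G)) :=
          mul_le_mul hSAle hSAle2 hSA0 (mul_nonneg haut_pos.le htHnn)
        calc SA * SA * p ^ (2 * k - A.card)
            ≤ (aut * tH H G A) * (aut * (ε * p ^ A.card * NHG H G)) * p ^ (2 * k - A.card) :=
              mul_le_mul_of_nonneg_right hmul hq
          _ = aut ^ 2 * (ε * p ^ (2 * k) * NHG H G * tH H G A) := by
              rw [show p ^ (2 * k) = p ^ A.card * p ^ (2 * k - A.card) by
                rw [← pow_add, Nat.add_sub_cancel' (by omega : A.card ≤ 2 * k)]]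
              ring
    exact h1.trans h2
  -- assemble
  have hconst : 0 ≤ ε * p ^ (2 * k) * NHG H G :=
    mul_nonneg (mul_nonneg hε.le (by positivity)) hN0
  calc c ^ 2 * ∑ s1 ∈ Bf, ∑ s2 ∈ Bf, MH H G s1 * MH H G s2 *
          (p ^ ((Finset.univ.map s1 ∪ Finset.univ.map s2).card) - p ^ k * p ^ k)
      ≤ c ^ 2 * ∑ A ∈ Afin, ∑ s1 ∈ Bf, ∑ s2 ∈ Bf,
          (if Finset.univ.map s1 ∩ Finset.univ.map s2 = A then
            MH H G s1 * MH H G s2 * p ^ (2 * k - A.card) else 0) := step1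
    _ ≤ c ^ 2 * ∑ A ∈ Afin, aut ^ 2 * (ε * p ^ (2 * k) * NHG H G * tH H G A) :=
        mul_le_mul_of_nonneg_left (Finset.sum_le_sum stepA) (by positivity)
    _ = ε * p ^ (2 * k) * NHG H G * ∑ A ∈ Afin, tH H G A := by
        rw [← Finset.mul_sum, ← mul_assoc, ← mul_pow, hca, one_pow, one_mul, ← Finset.mul_sum]
    _ ≤ ε * p ^ (2 * k) * NHG H G * (((2:ℝ) ^ k - 1) * NHG H G) := by
        refine mul_le_mul_of_nonneg_left ?_ hconst
        calc ∑ A ∈ Afin, tH H G A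
            ≤ ∑ A ∈ (Finset.univ : Finset (Finset V)).filter (fun A => A.Nonempty),
                tH H G A := by
              refine Finset.sum_le_sum_of_subset_of_nonneg ?_ fun A _ _ => tH_nonneg H G A
              intro A hA
              rw [hAfin, Finset.mem_filter] at hA
              rw [Finset.mem_filter]
              exact ⟨hA.1, hA.2.1⟩
          _ = ((2:ℝ) ^ k - 1) * NHG H G := sum_tH_nonempty H G
    _ = ε * ((2:ℝ) ^ k - 1) * p ^ (2 * k) * NHG H G ^ 2 := by ring
end
end
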